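/- arXiv:2306.02987 — 2 statements merged into one kernel-verified Lean document; each statement's English description precedes it below -/
import Mathlib

section
/- The unique solution m ∈ [0,1) of μ = (1 - η⁺η⁻)φ(μ) is nondecreasing in φ(0) and nonincreasing in the product η⁺η⁻. -/
theorem slope_monotone_in_Delta_and_efficiency
    (F : ℝ → ℝ) (hFmono : Monotone F) (hF0 : ∀ z, 0 ≤ F z) (hF1 : ∀ z, F z ≤ 1)
    (c₁ c₂ r₁ r₂ m₁ m₂ : ℝ)
    (hc : c₁ ≤ c₂) (hc₁ : 0 ≤ c₁)
    (hr₁ : r₁ ∈ Set.Ioc (0 : ℝ) 1) (hr₂ : r₂ ∈ Set.Ioc (0 : ℝ) 1) (hr : r₂ ≤ r₁)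
    (hm₁ : m₁ ∈ Set.Ico (0 : ℝ) 1 ∧ m₁ = (1 - r₁) * (c₁ + ∫ t in (0 : ℝ)..m₁, F t))
    (hm₂ : m₂ ∈ Set.Ico (0 : ℝ) 1 ∧ m₂ = (1 - r₂) * (c₂ + ∫ t in (0 : ℝ)..m₂, F t))
    (hu₁ : ∀ μ ∈ Set.Ico (0 : ℝ) 1, μ = (1 - r₁) * (c₁ + ∫ t in (0 : ℝ)..μ, F t) → μ = m₁)
    (hu₂ : ∀ μ ∈ Set.Ico (0 : ℝ) 1, μ = (1 - r₂) * (c₂ + ∫ t in (0 : ℝ)..μ, F t) → μ = m₂) :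
    m₁ ≤ m₂ := by
  by_contra hlt
  push_neg at hlt
  obtain ⟨⟨hm₁0, hm₁1⟩, he₁⟩ := hm₁
  obtain ⟨⟨hm₂0, hm₂1⟩, he₂⟩ := hm₂
  set I₁ := ∫ t in (0 : ℝ)..m₁, F t with hI₁
  set I₂ := ∫ t in (0 : ℝ)..m₂, F t with hI₂
  have hint : ∀ a b : ℝ, IntervalIntegrable F MeasureTheory.volume a b := fun a b =>
    hFmono.intervalIntegrable
  have hsplit : I₂ + ∫ t in m₂..m₁, F t = I₁ :=
    intervalIntegral.integral_add_adjacent_intervals (hint 0 m₂) (hint m₂ m₁)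
  have hJle : (∫ t in m₂..m₁, F t) ≤ m₁ - m₂ := by
    have h1 : (∫ t in m₂..m₁, F t) ≤ ∫ t in m₂..m₁, (1 : ℝ) := by
      apply intervalIntegral.integral_mono_on hlt.le (hint m₂ m₁)
        intervalIntegrable_const
      exact fun t _ => hF1 t
    simpa using h1
  have hI₁nonneg : 0 ≤ I₁ :=
    intervalIntegral.integral_nonneg hm₁0 (fun t _ => hF0 t)
  -- m₁ ≤ (1 - r₂) * (c₂ + I₁)
  have hr₁1 : r₁ ≤ 1 := hr₁.2
  have hr₂0 : 0 < r₂ := hr₂.1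
  have hstep : m₁ ≤ (1 - r₂) * (c₂ + I₁) := by
    rw [he₁]
    apply mul_le_mul (by linarith) (by linarith) (by linarith) (by linarith)
  have hdiff : m₁ - m₂ ≤ (1 - r₂) * (I₁ - I₂) := by
    have : m₂ = (1 - r₂) * (c₂ + I₂) := he₂
    nlinarith
  have hfin : (1 - r₂) * (I₁ - I₂) ≤ (1 - r₂) * (m₁ - m₂) := by
    apply mul_le_mul_of_nonneg_left _ (by linarith)
    linarith [hsplit, hJle]
  nlinarith
end

section
/- The asymptotic slope m, viewed as a function of the roundtrip efficiency r = η⁺η⁻ ∈ (0,1], satisfies m(r) = max over (a,b) ∈ A of (1-r)b/(1 - a(1-r)), where A = {(a,b) ∈ [0,1] × [0, φ(0)] : φ(μ) ≥ aμ + b for all μ ∈ ℝ}; consequently m(r) is convex and nonincreasing in r. -/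
/-!
For `(a, b) ∈ A`, the value `(1 - r) b / (1 - a (1 - r))` is the fixed point of
`μ ↦ (1 - r) (a μ + b)`; since `a μ + b ≤ φ μ`, it lies below the least solution `m(r)` of
`(1 - r) φ μ ≤ μ`. Continuity makes `m(r)` an actual fixed point of `μ ↦ (1 - r) φ μ`, and the
supporting line of `φ` at `m(r)` (slope the right derivative, which lies in `[0, 1]` because `φ` is
monotone and eventually the identity) attains the bound. Each `r ↦ (1 - r) b / (1 - a (1 - r))` is
convex and nonincreasing on `(0, 1]`, and a pointwise attained maximum of such functions inherits
both properties.
-/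

open Set Filter Topology

section SupOfFamily

variable {ι 𝕜 E β : Type*}

theorem convexOn_of_forall_isGreatest [Semiring 𝕜] [PartialOrder 𝕜] [AddCommMonoid E] [SMul 𝕜 E]
    [AddCommMonoid β] [PartialOrder β] [IsOrderedAddMonoid β] [Module 𝕜 β] [PosSMulMono 𝕜 β]
    {s : Set E} {I : Set ι} {F : ι → E → β} {g : E → β} (hs : Convex 𝕜 s)
    (hF : ∀ i ∈ I, ConvexOn 𝕜 s (F i)) (hg : ∀ x ∈ s, IsGreatest ((F · x) '' I) (g x)) :
    ConvexOn 𝕜 s g := by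
  refine ⟨hs, fun x hx y hy a b ha hb hab => ?_⟩
  obtain ⟨i, hi, hgi⟩ := (hg _ (hs hx hy ha hb hab)).1
  calc g (a • x + b • y) = F i (a • x + b • y) := hgi.symm
    _ ≤ a • F i x + b • F i y := (hF i hi).2 hx hy ha hb hab
    _ ≤ a • g x + b • g y := by
      gcongr
      · exact (hg x hx).2 ⟨i, hi, rfl⟩
      · exact (hg y hy).2 ⟨i, hi, rfl⟩

theorem antitoneOn_of_forall_isGreatest [Preorder E] [Preorder β] {s : Set E} {I : Set ι}
    {F : ι → E → β} {g : E → β} (hF : ∀ i ∈ I, AntitoneOn (F i) s)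
    (hg : ∀ x ∈ s, IsGreatest ((F · x) '' I) (g x)) : AntitoneOn g s := by
  intro x hx y hy hxy
  obtain ⟨i, hi, hgi⟩ := (hg y hy).1
  calc g y = F i y := hgi.symm
    _ ≤ F i x := hF i hi hx hy hxy
    _ ≤ g x := (hg x hx).2 ⟨i, hi, rfl⟩

end SupOfFamily

theorem IsLeast.apply_eq_self_of_continuousAt {α : Type*} [TopologicalSpace α] [LinearOrder α]
    [OrderTopology α] [DenselyOrdered α] [NoMinOrder α] {g : α → α} {μ : α}
    (hμ : IsLeast {x | g x ≤ x} μ) (hg : ContinuousAt g μ) : g μ = μ := by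
  refine hμ.1.eq_or_lt.resolve_right fun hlt => ?_
  have hnear : ∀ᶠ x in 𝓝[<] μ, g x < x :=
    nhdsWithin_le_nhds (hg.eventually_lt continuousAt_id hlt)
  obtain ⟨x, hgx, hxμ⟩ := (hnear.and self_mem_nhdsWithin).exists
  exact (hμ.2 hgx.le).not_gt hxμ

theorem ConvexOn.add_rightDeriv_mul_sub_le {S : Set ℝ} {f : ℝ → ℝ} {x y : ℝ}
    (hf : ConvexOn ℝ S f) (hx : x ∈ interior S) (hy : y ∈ S) :
    f x + derivWithin f (Ioi x) x * (y - x) ≤ f y := by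
  rcases lt_trichotomy y x with hyx | rfl | hxy
  · have hslope := (hf.slope_le_leftDeriv_of_mem_interior hy hx hyx).trans
      (hf.leftDeriv_le_rightDeriv_of_mem_interior hx)
    rw [slope_def_field, div_le_iff₀ (sub_pos.2 hyx)] at hslope
    linarith
  · simp
  · have hslope := hf.rightDeriv_le_slope_of_mem_interior hx hy hxy
    rw [slope_def_field, le_div_iff₀ (sub_pos.2 hxy)] at hslope
    linarith

theorem ConvexOn.rightDeriv_le_one {f : ℝ → ℝ} (hf : ConvexOn ℝ univ f)
    (hid : ∀ z ≥ (1 : ℝ), f z = z) (x : ℝ) : derivWithin f (Ioi x) x ≤ 1 := by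
  set y := max x 1
  have hy : f y = y := hid y (le_max_right x 1)
  calc derivWithin f (Ioi x) x ≤ derivWithin f (Ioi y) y :=
        hf.monotoneOn_rightDeriv (by simp) (by simp) (le_max_left x 1)
    _ ≤ slope f y (y + 1) := hf.rightDeriv_le_slope_of_mem_interior (by simp) trivial (by linarith)
    _ = 1 := by
      rw [slope_def_field, hid (y + 1) (by linarith [le_max_right x 1]), hy]
      norm_num

def affineMinorants (φ : ℝ → ℝ) : Set (ℝ × ℝ) :=
  {p | p.1 ∈ Icc 0 1 ∧ p.2 ∈ Icc 0 (φ 0) ∧ ∀ μ, p.1 * μ + p.2 ≤ φ μ}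

noncomputable def minorantFixedPoint (p : ℝ × ℝ) (r : ℝ) : ℝ :=
  (1 - r) * p.2 / (1 - p.1 * (1 - r))

theorem one_sub_mul_one_sub_pos {a r : ℝ} (ha : a ∈ Icc (0 : ℝ) 1) (hr : r ∈ Ioc (0 : ℝ) 1) :
    0 < 1 - a * (1 - r) := by
  nlinarith [ha.1, ha.2, hr.1, hr.2]

theorem convexOn_minorantFixedPoint {p : ℝ × ℝ} (ha : p.1 ∈ Icc (0 : ℝ) 1) (hb : 0 ≤ p.2) :
    ConvexOn ℝ (Ioc 0 1) (minorantFixedPoint p) := by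
  obtain ⟨a, b⟩ := p
  dsimp only at ha hb
  refine ⟨convex_Ioc 0 1, fun r₁ hr₁ r₂ hr₂ t t' ht ht' htt' => ?_⟩
  obtain rfl : t' = 1 - t := by linarith
  have hr : t * r₁ + (1 - t) * r₂ ∈ Ioc (0 : ℝ) 1 := convex_Ioc 0 1 hr₁ hr₂ ht ht' htt'
  have hD := one_sub_mul_one_sub_pos ha hr
  have hD₁ := one_sub_mul_one_sub_pos ha hr₁
  have hD₂ := one_sub_mul_one_sub_pos ha hr₂
  simp only [minorantFixedPoint, smul_eq_mul]
  -- the Jensen gap of `s ↦ s / (1 - a s)` is `a` times that of `D ↦ 1 / D`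
  have hgap : t * ((1 - r₁) * b / (1 - a * (1 - r₁))) + (1 - t) * ((1 - r₂) * b / (1 - a * (1 - r₂)))
      - (1 - (t * r₁ + (1 - t) * r₂)) * b / (1 - a * (1 - (t * r₁ + (1 - t) * r₂))) =
      a * b * t * (1 - t) * (r₁ - r₂) ^ 2 /
        ((1 - a * (1 - r₁)) * (1 - a * (1 - r₂)) * (1 - a * (1 - (t * r₁ + (1 - t) * r₂)))) := by
    rw [mul_div_assoc', mul_div_assoc', div_add_div _ _ hD₁.ne' hD₂.ne',
      div_sub_div _ _ (mul_pos hD₁ hD₂).ne' hD.ne', div_eq_div_iff (by positivity) (by positivity)]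
    ring
  rw [← sub_nonneg, hgap]
  have := ha.1
  positivity

theorem antitoneOn_minorantFixedPoint {p : ℝ × ℝ} (ha : p.1 ∈ Icc (0 : ℝ) 1) (hb : 0 ≤ p.2) :
    AntitoneOn (minorantFixedPoint p) (Ioc 0 1) := by
  intro r₁ hr₁ r₂ hr₂ hr
  rw [minorantFixedPoint, minorantFixedPoint,
    div_le_div_iff₀ (one_sub_mul_one_sub_pos ha hr₂) (one_sub_mul_one_sub_pos ha hr₁)]
  nlinarith [mul_nonneg hb (sub_nonneg.2 hr)]

section Envelope

variable {φ : ℝ → ℝ} {p : ℝ × ℝ} {r μ : ℝ}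

theorem minorantFixedPoint_le (hp : p ∈ affineMinorants φ) (hr : r ∈ Ioc (0 : ℝ) 1)
    (hμ : (1 - r) * φ μ ≤ μ) : minorantFixedPoint p r ≤ μ := by
  rw [minorantFixedPoint, div_le_iff₀ (one_sub_mul_one_sub_pos hp.1 hr)]
  nlinarith [mul_le_mul_of_nonneg_left (hp.2.2 μ) (sub_nonneg.2 hr.2)]

theorem exists_minorantFixedPoint_eq (hconv : ConvexOn ℝ univ φ) (hmono : Monotone φ)
    (hid : ∀ z ≥ (1 : ℝ), φ z = z) (hr : r ∈ Ioc (0 : ℝ) 1) (hφμ : 0 ≤ φ μ)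
    (hμ : (1 - r) * φ μ = μ) : ∃ p ∈ affineMinorants φ, minorantFixedPoint p r = μ := by
  set a := derivWithin φ (Ioi μ) μ
  have hsupp (y : ℝ) : φ μ + a * (y - μ) ≤ φ y :=
    hconv.add_rightDeriv_mul_sub_le (by simp) trivial
  have ha : a ∈ Icc (0 : ℝ) 1 :=
    ⟨(hmono.monotoneOn _).derivWithin_nonneg, hconv.rightDeriv_le_one hid μ⟩
  have hμ_nonneg : 0 ≤ μ := hμ ▸ mul_nonneg (sub_nonneg.2 hr.2) hφμ
  refine ⟨(a, φ μ - a * μ), ⟨ha, ⟨?_, ?_⟩, fun y => ?_⟩, ?_⟩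
  · nlinarith [mul_le_of_le_one_left hμ_nonneg ha.2, hr.1]
  · linarith [hsupp 0]
  · linarith [hsupp y]
  · rw [minorantFixedPoint, div_eq_iff (one_sub_mul_one_sub_pos ha hr).ne']
    linear_combination hμ

theorem isGreatest_minorantFixedPoint (hconv : ConvexOn ℝ univ φ) (hmono : Monotone φ)
    (hid : ∀ z ≥ (1 : ℝ), φ z = z) (hr : r ∈ Ioc (0 : ℝ) 1) (hφμ : 0 ≤ φ μ)
    (hμ : (1 - r) * φ μ = μ) : IsGreatest ((minorantFixedPoint · r) '' affineMinorants φ) μ :=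
  ⟨exists_minorantFixedPoint_eq hconv hmono hid hr hφμ hμ, by
    rintro _ ⟨p, hp, rfl⟩
    exact minorantFixedPoint_le hp hr hμ.le⟩

theorem image_minorantFixedPoint_affineMinorants (φ : ℝ → ℝ) (r : ℝ) :
    (minorantFixedPoint · r) '' affineMinorants φ =
      {v : ℝ | ∃ a b : ℝ, a ∈ Icc (0 : ℝ) 1 ∧ b ∈ Icc (0 : ℝ) (φ 0) ∧
        (∀ μ : ℝ, a * μ + b ≤ φ μ) ∧ v = (1 - r) * b / (1 - a * (1 - r))} := by
  ext v
  simp [affineMinorants, minorantFixedPoint, eq_comm, and_assoc]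

end Envelope

theorem slope_envelope_representation
    (φ : ℝ → ℝ) (hconv : ConvexOn ℝ Set.univ φ) (hmono : Monotone φ)
    (hcont : Continuous φ)
    (h0 : ∀ z ≤ (-1 : ℝ), φ z = 0) (h1 : ∀ z ≥ (1 : ℝ), φ z = z)
    (m : ℝ → ℝ)
    (hm : ∀ r ∈ Set.Ioc (0 : ℝ) 1, IsLeast {μ : ℝ | (1 - r) * φ μ ≤ μ} (m r)) :
    (∀ r ∈ Set.Ioc (0 : ℝ) 1,
      IsGreatest {v : ℝ | ∃ a b : ℝ, a ∈ Set.Icc (0 : ℝ) 1 ∧ b ∈ Set.Icc (0 : ℝ) (φ 0) ∧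
        (∀ μ : ℝ, a * μ + b ≤ φ μ) ∧ v = (1 - r) * b / (1 - a * (1 - r))} (m r)) ∧
    ConvexOn ℝ (Set.Ioc (0 : ℝ) 1) m ∧ AntitoneOn m (Set.Ioc (0 : ℝ) 1) := by
  have hφ_nonneg (z : ℝ) : 0 ≤ φ z :=
    (h0 (min z (-1)) (min_le_right _ _)).symm.le.trans (hmono (min_le_left _ _))
  have hfix (r : ℝ) (hr : r ∈ Ioc (0 : ℝ) 1) : (1 - r) * φ (m r) = m r :=
    (hm r hr).apply_eq_self_of_continuousAt (g := fun μ => (1 - r) * φ μ) (by fun_prop)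
  have hgreat (r : ℝ) (hr : r ∈ Ioc (0 : ℝ) 1) :
      IsGreatest ((minorantFixedPoint · r) '' affineMinorants φ) (m r) :=
    isGreatest_minorantFixedPoint hconv hmono h1 hr (hφ_nonneg _) (hfix r hr)
  refine ⟨fun r hr => image_minorantFixedPoint_affineMinorants φ r ▸ hgreat r hr, ?_, ?_⟩
  · exact convexOn_of_forall_isGreatest (convex_Ioc 0 1)
      (fun p hp => convexOn_minorantFixedPoint hp.1 hp.2.1.1) hgreat
  · exact antitoneOn_of_forall_isGreatest
      (fun p hp => antitoneOn_minorantFixedPoint hp.1 hp.2.1.1) hgreat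
end
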